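/- Let α ∈ (1/2, 1), s > (1−α)/2, and c < 2s + α − 1. Then sup over n ∈ ℤ of the sum over pairs of nonzero integers (k, j) with 0 < |kj| ≲ |n|^{2−2α} of ⟨n⟩^{2s+2c}/(⟨n+j⟩^{2s} ⟨n+k⟩^{2s} ⟨n+j+k⟩^{2s}) is finite; the sum is bounded by C ⟨n⟩^{−4s+2c+2−2α} log⟨n⟩. -/

import Mathlib

/-!
For large `|n|` the constraint `|k j| ≤ M := A |n|^(2-2α)` forces `4|k|, 4|j| ≤ 4M ≤ |n|`
(because `2 - 2α < 1`), so `⟨n + j⟩, ⟨n + k⟩, ⟨n + j + k⟩ ≥ ⟨n⟩ / 2` and every term is at most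
`2^(6s) ⟨n⟩^(2c - 4s)`. The admissible pairs are four copies of the lattice points under the
hyperbola `a b ≤ M`, of which there are at most `∑_{a ≤ M} M / a ≤ M (1 + log M)`; this gives
`⟨n⟩^(2-2α) log ⟨n⟩` pairs. The finitely many remaining `n` are absorbed into the constant, and at
`n = 0` both sides vanish.
-/

open Real

/-- Japanese bracket of an integer. -/
noncomputable def jb (m : ℤ) : ℝ := Real.sqrt (1 + (m : ℝ) ^ 2)

open Filter Finset Asymptotics

lemma jb_pos (m : ℤ) : 0 < jb m := Real.sqrt_pos.2 (by positivity)

lemma one_le_jb (m : ℤ) : 1 ≤ jb m := Real.one_le_sqrt.2 (by nlinarith)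

lemma jb_rpow_pos (m : ℤ) (t : ℝ) : 0 < jb m ^ t := rpow_pos_of_pos (jb_pos m) t

lemma abs_le_jb (m : ℤ) : |(m : ℝ)| ≤ jb m := by
  rw [← Real.sqrt_sq_eq_abs]
  exact Real.sqrt_le_sqrt (by linarith)

lemma log_jb_pos {m : ℤ} (hm : m ≠ 0) : 0 < Real.log (jb m) := by
  refine Real.log_pos ((Real.lt_sqrt zero_le_one).2 ?_)
  have : (0 : ℝ) < (m : ℝ) ^ 2 := by positivity
  linarith

lemma jb_le_two_mul_jb_add {n k : ℤ} (h : 2 * |k| ≤ |n|) : jb n ≤ 2 * jb (n + k) := by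
  have hk : 2 * |(k : ℝ)| ≤ |(n : ℝ)| := by exact_mod_cast h
  have htri : |(n : ℝ)| ≤ |(n : ℝ) + k| + |(k : ℝ)| := by
    simpa using abs_sub ((n : ℝ) + k) k
  have hsq : (n : ℝ) ^ 2 ≤ (2 * ((n : ℝ) + k)) ^ 2 := by
    rw [sq_le_sq, abs_mul, abs_two]
    linarith
  calc jb n ≤ Real.sqrt (2 ^ 2 * (1 + ((n + k : ℤ) : ℝ) ^ 2)) :=
        Real.sqrt_le_sqrt (by push_cast; nlinarith)
    _ = 2 * jb (n + k) := by rw [Real.sqrt_mul (by norm_num), Real.sqrt_sq zero_le_two, jb]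

noncomputable def weight (s c : ℝ) (n k j : ℤ) : ℝ :=
  jb n ^ (2 * s + 2 * c) /
    (jb (n + j) ^ (2 * s) * jb (n + k) ^ (2 * s) * jb (n + j + k) ^ (2 * s))

lemma weight_pos (s c : ℝ) (n k j : ℤ) : 0 < weight s c n k j :=
  div_pos (jb_rpow_pos _ _)
    (mul_pos (mul_pos (jb_rpow_pos _ _) (jb_rpow_pos _ _)) (jb_rpow_pos _ _))

lemma weight_le {s : ℝ} (c : ℝ) (hs : 0 ≤ s) {n k j : ℤ} (hk : 4 * |k| ≤ |n|)
    (hj : 4 * |j| ≤ |n|) : weight s c n k j ≤ 2 ^ (6 * s) * jb n ^ (2 * c - 4 * s) := by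
  have hn := jb_pos n
  have hlow : ∀ m, 2 * |m| ≤ |n| → (jb n / 2) ^ (2 * s) ≤ jb (n + m) ^ (2 * s) := fun m hm =>
    rpow_le_rpow (by positivity) (by linarith [jb_le_two_mul_jb_add hm]) (by linarith)
  have h1 := hlow j (by linarith [abs_nonneg j])
  have h2 := hlow k (by linarith [abs_nonneg k])
  have h3 := hlow (j + k) (by linarith [abs_add_le j k])
  rw [← add_assoc] at h3
  have hq : 0 < (jb n / 2) ^ (2 * s) := by positivity
  calc weight s c n k j
      ≤ jb n ^ (2 * s + 2 * c) /
          ((jb n / 2) ^ (2 * s) * (jb n / 2) ^ (2 * s) * (jb n / 2) ^ (2 * s)) :=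
        div_le_div_of_nonneg_left (jb_rpow_pos n _).le (by positivity)
          (mul_le_mul (mul_le_mul h1 h2 hq.le (jb_rpow_pos _ _).le) h3 hq.le
            (mul_pos (jb_rpow_pos _ _) (jb_rpow_pos _ _)).le)
    _ = 2 ^ (6 * s) * jb n ^ (2 * c - 4 * s) := by
        rw [div_rpow hn.le zero_le_two, show 6 * s = 2 * s + 2 * s + 2 * s by ring,
          show 2 * s + 2 * c = (2 * c - 4 * s) + 2 * s + 2 * s + 2 * s by ring,
          rpow_add two_pos, rpow_add two_pos, rpow_add hn, rpow_add hn, rpow_add hn]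
        field_simp

def posHyperbolicPairs (N : ℕ) : Finset (ℕ × ℕ) :=
  {p ∈ Icc 1 N ×ˢ Icc 1 N | p.1 * p.2 ≤ N}

noncomputable def hyperbolicPairs (N : ℕ) : Finset (ℤ × ℤ) :=
  {p ∈ Icc (-N : ℤ) N ×ˢ Icc (-N : ℤ) N | p.1 ≠ 0 ∧ p.2 ≠ 0 ∧ p.1.natAbs * p.2.natAbs ≤ N}

lemma mem_hyperbolicPairs {N : ℕ} {p : ℤ × ℤ} :
    p ∈ hyperbolicPairs N ↔ p.1 ≠ 0 ∧ p.2 ≠ 0 ∧ p.1.natAbs * p.2.natAbs ≤ N := by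
  refine ⟨fun hp => (mem_filter.1 hp).2, fun ⟨hk, hj, hkj⟩ => ?_⟩
  have hkN : p.1.natAbs ≤ N := (Nat.le_mul_of_pos_right _ (Int.natAbs_pos.2 hj)).trans hkj
  have hjN : p.2.natAbs ≤ N := (Nat.le_mul_of_pos_left _ (Int.natAbs_pos.2 hk)).trans hkj
  simp only [hyperbolicPairs, mem_filter, mem_product, mem_Icc]
  omega

lemma card_posHyperbolicPairs_le (N : ℕ) :
    (#(posHyperbolicPairs N) : ℝ) ≤ N * (1 + Real.log N) := by
  have hfiber : ∀ a ∈ Icc 1 N, #{p ∈ posHyperbolicPairs N | p.1 = a} ≤ N / a := by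
    intro a ha
    have ha : 0 < a := (mem_Icc.1 ha).1
    calc #{p ∈ posHyperbolicPairs N | p.1 = a} ≤ #({a} ×ˢ Icc 1 (N / a)) := by
          refine card_le_card fun p hp => ?_
          simp only [posHyperbolicPairs, mem_filter, mem_product, mem_Icc] at hp
          obtain ⟨⟨⟨-, hb, -⟩, hab⟩, rfl⟩ := hp
          simp only [mem_product, mem_singleton, mem_Icc, Nat.le_div_iff_mul_le ha]
          exact ⟨trivial, hb, by linarith⟩
      _ = N / a := by simp
  have hcard : #(posHyperbolicPairs N) ≤ ∑ a ∈ Icc 1 N, N / a := by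
    rw [card_eq_sum_card_fiberwise (s := posHyperbolicPairs N) (f := Prod.fst) (t := Icc 1 N)
      fun p hp => (mem_product.1 (mem_filter.1 hp).1).1]
    exact sum_le_sum hfiber
  calc (#(posHyperbolicPairs N) : ℝ) ≤ ∑ a ∈ Icc 1 N, ((N / a : ℕ) : ℝ) := by
        exact_mod_cast hcard
    _ ≤ ∑ a ∈ Icc 1 N, (N : ℝ) * (a : ℝ)⁻¹ :=
        sum_le_sum fun a _ => Nat.cast_div_le.trans_eq (div_eq_mul_inv _ _)
    _ = N * harmonic N := by
        rw [← mul_sum, harmonic_eq_sum_Icc]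
        push_cast
        rfl
    _ ≤ N * (1 + Real.log N) :=
        mul_le_mul_of_nonneg_left (harmonic_le_one_add_log N) (by positivity)

lemma card_hyperbolicPairs_le (N : ℕ) : #(hyperbolicPairs N) ≤ 4 * #(posHyperbolicPairs N) := by
  let f : ℤ × ℤ → ℕ × ℕ := fun p => (p.1.natAbs, p.2.natAbs)
  have hfiber : ∀ b ∈ (hyperbolicPairs N).image f, #{p ∈ hyperbolicPairs N | f p = b} ≤ 4 := by
    intro b _
    refine (card_le_card fun p hp => ?_).trans
      (card_le_four (a := ((b.1 : ℤ), (b.2 : ℤ))) (b := (b.1, -b.2)) (c := (-b.1, b.2))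
        (d := (-b.1, -b.2)))
    obtain ⟨-, hb⟩ := mem_filter.1 hp
    simp only [f, Prod.ext_iff, Int.natAbs_eq_iff] at hb
    rcases hb with ⟨h1 | h1, h2 | h2⟩ <;> simp [Prod.ext_iff, h1, h2]
  have himage : (hyperbolicPairs N).image f ⊆ posHyperbolicPairs N := by
    intro b hb
    obtain ⟨p, hp, rfl⟩ := mem_image.1 hb
    simp only [hyperbolicPairs, mem_filter, mem_product, mem_Icc] at hp
    simp only [posHyperbolicPairs, f, mem_filter, mem_product, mem_Icc]
    omega
  calc #(hyperbolicPairs N) ≤ 4 * #((hyperbolicPairs N).image f) :=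
        card_le_mul_card_image _ 4 hfiber
    _ ≤ 4 * #(posHyperbolicPairs N) := Nat.mul_le_mul_left 4 (card_le_card himage)

noncomputable def lowSum (s c M : ℝ) (n : ℤ) : ℝ :=
  ∑' p : ℤ × ℤ, if p.1 ≠ 0 ∧ p.2 ≠ 0 ∧ |(p.1 : ℝ) * p.2| ≤ M then weight s c n p.1 p.2 else 0

lemma lowSum_nonneg (s c M : ℝ) (n : ℤ) : 0 ≤ lowSum s c M n :=
  tsum_nonneg fun _ => by
    split_ifs
    exacts [(weight_pos _ _ _ _ _).le, le_rfl]

lemma lowSum_eq_zero_of_lt_one {s c M : ℝ} (hM : M < 1) (n : ℤ) : lowSum s c M n = 0 := by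
  refine (tsum_congr fun p => if_neg ?_).trans tsum_zero
  rintro ⟨hk, hj, hkj⟩
  have : (1 : ℝ) ≤ |(p.1 : ℝ) * p.2| := by exact_mod_cast Int.one_le_abs (mul_ne_zero hk hj)
  linarith

lemma lowSum_le_card_mul {s M : ℝ} (c : ℝ) (hs : 0 ≤ s) {n : ℤ}
    (hMn : 4 * M ≤ |(n : ℝ)|) :
    lowSum s c M n ≤ #(hyperbolicPairs ⌊M⌋₊) * (2 ^ (6 * s) * jb n ^ (2 * c - 4 * s)) := by
  have hfactor : ∀ {k j : ℤ}, j ≠ 0 → |(k : ℝ) * j| ≤ M → 4 * |k| ≤ |n| := by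
    intro k j hj hkj
    have : |(k : ℝ)| ≤ |(k : ℝ) * j| := by
      rw [abs_mul]
      exact le_mul_of_one_le_right (abs_nonneg _) (by exact_mod_cast Int.one_le_abs hj)
    exact_mod_cast (by linarith : 4 * |(k : ℝ)| ≤ |(n : ℝ)|)
  have hmem : ∀ p : ℤ × ℤ, p.1 ≠ 0 ∧ p.2 ≠ 0 ∧ |(p.1 : ℝ) * p.2| ≤ M →
      p ∈ hyperbolicPairs ⌊M⌋₊ := by
    rintro p ⟨hk, hj, hkj⟩
    refine mem_hyperbolicPairs.2 ⟨hk, hj, Nat.le_floor ?_⟩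
    simpa [abs_mul] using hkj
  rw [lowSum, tsum_eq_sum (s := hyperbolicPairs ⌊M⌋₊) fun p hp => if_neg (mt (hmem p) hp),
    ← nsmul_eq_mul]
  refine sum_le_card_nsmul _ _ _ fun p _ => ?_
  split_ifs with hp
  · obtain ⟨hk, hj, hkj⟩ := hp
    exact weight_le c hs (hfactor hj hkj) (hfactor hk (by rwa [mul_comm]))
  · exact mul_nonneg (by positivity) (jb_rpow_pos n _).le

lemma lowSum_le {s M : ℝ} (c : ℝ) (hs : 0 ≤ s) (hM : 0 ≤ M) {n : ℤ} (hMn : 4 * M ≤ |(n : ℝ)|)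
    (hn : 3 ≤ |(n : ℝ)|) :
    lowSum s c M n ≤ 2 ^ (6 * s) * 8 * M * jb n ^ (2 * c - 4 * s) * Real.log (jb n) := by
  set N := ⌊M⌋₊
  have hNM : (N : ℝ) ≤ M := Nat.floor_le hM
  have hnjb := abs_le_jb n
  have hlogN : Real.log N ≤ Real.log (jb n) := by
    rcases N.eq_zero_or_pos with hN | hN
    · simpa [hN] using Real.log_nonneg (one_le_jb n)
    · exact Real.log_le_log (by positivity) (by linarith)
  have hlog : 1 ≤ Real.log (jb n) := by
    rw [Real.le_log_iff_exp_le (jb_pos n)]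
    linarith [Real.exp_one_lt_d9]
  have hcard : (#(hyperbolicPairs N) : ℝ) ≤ 8 * M * Real.log (jb n) :=
    calc (#(hyperbolicPairs N) : ℝ) ≤ 4 * #(posHyperbolicPairs N) := by
          exact_mod_cast card_hyperbolicPairs_le N
      _ ≤ 4 * (N * (1 + Real.log N)) := by linarith [card_posHyperbolicPairs_le N]
      _ ≤ 4 * (M * (2 * Real.log (jb n))) := by gcongr; linarith
      _ = 8 * M * Real.log (jb n) := by ring
  calc lowSum s c M n ≤ #(hyperbolicPairs N) * (2 ^ (6 * s) * jb n ^ (2 * c - 4 * s)) :=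
        lowSum_le_card_mul c hs hMn
    _ ≤ 8 * M * Real.log (jb n) * (2 ^ (6 * s) * jb n ^ (2 * c - 4 * s)) :=
        mul_le_mul_of_nonneg_right hcard (mul_nonneg (by positivity) (jb_rpow_pos n _).le)
    _ = 2 ^ (6 * s) * 8 * M * jb n ^ (2 * c - 4 * s) * Real.log (jb n) := by ring

lemma lowSum_le_rpow {α s A : ℝ} (c : ℝ) (hα : α ≤ 1) (hs : 0 ≤ s) (hA : 0 ≤ A) {n : ℤ}
    (hMn : 4 * (A * |(n : ℝ)| ^ (2 - 2 * α)) ≤ |(n : ℝ)|) (hn : 3 ≤ |(n : ℝ)|) :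
    lowSum s c (A * |(n : ℝ)| ^ (2 - 2 * α)) n ≤
      2 ^ (6 * s) * 8 * A * (jb n ^ (-4 * s + 2 * c + 2 - 2 * α) * Real.log (jb n)) := by
  have hjb := jb_pos n
  have hM : A * |(n : ℝ)| ^ (2 - 2 * α) ≤ A * jb n ^ (2 - 2 * α) :=
    mul_le_mul_of_nonneg_left
      (rpow_le_rpow (abs_nonneg _) (abs_le_jb n) (by linarith)) hA
  calc lowSum s c (A * |(n : ℝ)| ^ (2 - 2 * α)) n
      ≤ 2 ^ (6 * s) * 8 * (A * |(n : ℝ)| ^ (2 - 2 * α)) * jb n ^ (2 * c - 4 * s) *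
          Real.log (jb n) := lowSum_le c hs (by positivity) hMn hn
    _ ≤ 2 ^ (6 * s) * 8 * (A * jb n ^ (2 - 2 * α)) * jb n ^ (2 * c - 4 * s) *
          Real.log (jb n) := by
        gcongr
        exact Real.log_nonneg (one_le_jb n)
    _ = 2 ^ (6 * s) * 8 * A * (jb n ^ (-4 * s + 2 * c + 2 - 2 * α) * Real.log (jb n)) := by
        rw [show -4 * s + 2 * c + 2 - 2 * α = (2 - 2 * α) + (2 * c - 4 * s) by ring,
          rpow_add hjb]
        ring

lemma eventually_mul_rpow_le_self {γ : ℝ} (hγ : γ < 1) (B : ℝ) :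
    ∀ᶠ x : ℝ in atTop, B * x ^ γ ≤ x := by
  filter_upwards [(tendsto_rpow_atTop (sub_pos.2 hγ)).eventually_ge_atTop B,
    eventually_gt_atTop 0] with x hx hx0
  calc B * x ^ γ ≤ x ^ (1 - γ) * x ^ γ := mul_le_mul_of_nonneg_right hx (rpow_nonneg hx0.le _)
    _ = x := by rw [← rpow_add hx0, sub_add_cancel, rpow_one]

lemma tendsto_abs_intCast_cofinite : Tendsto (fun n : ℤ => |(n : ℝ)|) cofinite atTop :=
  tendsto_norm_cocompact_atTop.comp Int.tendsto_coe_cofinite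

lemma exists_pos_forall_le_mul_of_eventually_cofinite {ι : Type*} {f g : ι → ℝ} {C₀ : ℝ}
    (hf : ∀ i, 0 ≤ f i) (hg : ∀ i, 0 ≤ g i) (hfg : ∀ i, g i = 0 → f i = 0)
    (h : ∀ᶠ i in cofinite, f i ≤ C₀ * g i) : ∃ C > 0, ∀ i, f i ≤ C * g i := by
  have hO : f =O[cofinite] g := IsBigO.of_bound C₀ <| h.mono fun i hi => by
    rwa [Real.norm_of_nonneg (hf i), Real.norm_of_nonneg (hg i)]
  obtain ⟨C, hC⟩ := (isBigO_cofinite_iff hfg).1 hO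
  refine ⟨max C 1, by positivity, fun i => ?_⟩
  calc f i ≤ C * g i := by
        simpa [Real.norm_of_nonneg (hf i), Real.norm_of_nonneg (hg i)] using hC i
    _ ≤ max C 1 * g i := mul_le_mul_of_nonneg_right (le_max_left _ _) (hg i)

theorem stmt_16_general (α s c A : ℝ) (hα : 1 / 2 < α) (hα1 : α < 1)
    (hs : (1 - α) / 2 < s) (hA : 0 < A) :
    ∃ C > 0, ∀ n : ℤ,
      (∑' p : ℤ × ℤ,
        if p.1 ≠ 0 ∧ p.2 ≠ 0 ∧ (|p.1 * p.2| : ℝ) ≤ A * (|n| : ℝ) ^ (2 - 2 * α) then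
          jb n ^ (2 * s + 2 * c) /
            (jb (n + p.2) ^ (2 * s) * jb (n + p.1) ^ (2 * s) * jb (n + p.2 + p.1) ^ (2 * s))
        else 0)
        ≤ C * jb n ^ (-4 * s + 2 * c + 2 - 2 * α) * Real.log (jb n) := by
  have hs0 : 0 ≤ s := by linarith
  set e := -4 * s + 2 * c + 2 - 2 * α
  have hlarge : ∀ᶠ n : ℤ in cofinite, lowSum s c (A * |(n : ℝ)| ^ (2 - 2 * α)) n ≤
      2 ^ (6 * s) * 8 * A * (jb n ^ e * Real.log (jb n)) := by
    filter_upwards [tendsto_abs_intCast_cofinite.eventually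
      ((eventually_mul_rpow_le_self (by linarith : 2 - 2 * α < 1) (4 * A)).and
        (eventually_ge_atTop 3))] with n ⟨hMn, hn⟩
    exact lowSum_le_rpow c hα1.le hs0 hA.le (by linarith) hn
  have hzero : ∀ n : ℤ, jb n ^ e * Real.log (jb n) = 0 →
      lowSum s c (A * |(n : ℝ)| ^ (2 - 2 * α)) n = 0 := by
    intro n hn
    obtain rfl : n = 0 := by
      by_contra h0
      exact (mul_pos (jb_rpow_pos n e) (log_jb_pos h0)).ne' hn
    refine lowSum_eq_zero_of_lt_one ?_ 0
    simp [zero_rpow (by linarith : (2 - 2 * α) ≠ 0)]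
  obtain ⟨C, hC, hbound⟩ := exists_pos_forall_le_mul_of_eventually_cofinite
    (fun n => lowSum_nonneg s c _ n)
    (fun n => mul_nonneg (jb_rpow_pos n e).le (Real.log_nonneg (one_le_jb n)))
    hzero hlarge
  exact ⟨C, hC, fun n => (hbound n).trans_eq (mul_assoc _ _ _).symm⟩

/-- low-interaction sum in the smoothing estimate,
`∑_{0<|kj| ≤ A|n|^{2-2α}} ⟨n⟩^{2s+2c}/(⟨n+j⟩^{2s}⟨n+k⟩^{2s}⟨n+j+k⟩^{2s})
  ≲ ⟨n⟩^{-4s+2c+2-2α} log⟨n⟩` for `c < 2s + α - 1`. Here `p.1 = k`, `p.2 = j`. -/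
theorem stmt_16 (α s c A : ℝ) (hα : 1 / 2 < α) (hα1 : α < 1)
    (hs : (1 - α) / 2 < s) (hc : c < 2 * s + α - 1) (hA : 0 < A) :
    ∃ C > 0, ∀ n : ℤ,
      (∑' p : ℤ × ℤ,
        if p.1 ≠ 0 ∧ p.2 ≠ 0 ∧ (|p.1 * p.2| : ℝ) ≤ A * (|n| : ℝ) ^ (2 - 2 * α) then
          jb n ^ (2 * s + 2 * c) /
            (jb (n + p.2) ^ (2 * s) * jb (n + p.1) ^ (2 * s) * jb (n + p.2 + p.1) ^ (2 * s))
        else 0)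
        ≤ C * jb n ^ (-4 * s + 2 * c + 2 - 2 * α) * Real.log (jb n) :=
  stmt_16_general α s c A hα hα1 hs hA
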